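/- Let X be a compact abelian group with Haar probability measure ℙ and let g_1, …, g_n be continuous characters of X with pairwise distinct prime orders r_1, …, r_n. Then ℙ(⋂_{k=1}^n g_k⁻¹({1})) = (r_1 r_2 ⋯ r_n)^{-1}, i.e., the events {g_k = 1} are mutually independent. -/

import Mathlib

/-!
The characters `g k` take values in the `r k`-th roots of unity, so `x ↦ (g k x)ₖ` is a
homomorphism `Φ` from `X` into the finite group `∏ₖ μ_{r k}(ℂ)`, and the intersection of the
kernels is `ker Φ`. Every `r k` divides `|Φ(X)|`, because some `Φ x` has a nontrivial, hence
order `r k`, `k`-th coordinate; as the `r k` are distinct primes, `|Φ(X)| = ∏ₖ r k`. Finally, a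
subgroup of index `N` has Haar measure `1 / N`: its `N` cosets are translates of equal measure
partitioning `X`.
-/

open MeasureTheory

theorem Subgroup.measure_eq_inv_index {G : Type*} [Group G] [MeasurableSpace G] [MeasurableMul G]
    (H : Subgroup G) [H.FiniteIndex] (hH : MeasurableSet (H : Set G))
    (μ : Measure G) [μ.IsMulLeftInvariant] [IsProbabilityMeasure μ] :
    μ H = (H.index : ENNReal)⁻¹ := by
  refine ENNReal.eq_inv_of_mul_eq_one_left ?_
  rw [mul_comm, H.index_mul_measure hH μ, measure_univ]

theorem MonoidHom.orderOf_dvd_natCard_range {G H : Type*} [Group G] [Group H] (f : G →* H)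
    (x : G) : orderOf (f x) ∣ Nat.card f.range := by
  rw [← f.coe_rangeRestrict, Subgroup.orderOf_coe]
  exact orderOf_dvd_natCard _

theorem Nat.prod_dvd_of_injective_of_prime {ι : Type*} [Fintype ι] {r : ι → ℕ}
    (hprime : ∀ k, (r k).Prime) (hinj : Function.Injective r) {N : ℕ} (hdvd : ∀ k, r k ∣ N) :
    ∏ k, r k ∣ N := by
  classical
  have h := Finset.prod_primes_dvd (s := Finset.univ.image r) N
    (by simpa using fun k => (hprime k).prime) (by simpa using hdvd)
  rwa [Finset.prod_image fun i _ j _ h => hinj h] at h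

namespace PontryaginDual

section Monoid

variable {X : Type*} [Monoid X] [TopologicalSpace X]

theorem pow_apply (χ : PontryaginDual X) (m : ℕ) (x : X) : (χ ^ m) x = χ x ^ m :=
  ContinuousMonoidHom.pow_apply χ m x

noncomputable def toRootsOfUnity (χ : PontryaginDual X) {m : ℕ} (hχ : χ ^ m = 1) :
    X →* rootsOfUnity m ℂ :=
  (Circle.toUnits.comp (χ : X →* Circle)).codRestrict _ fun x => by
    have hx : χ x ^ m = 1 := by rw [← pow_apply, hχ, one_apply]
    rw [mem_rootsOfUnity, MonoidHom.comp_apply, MonoidHom.coe_coe, ← map_pow, hx, _root_.map_one]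

theorem toRootsOfUnity_eq_one_iff (χ : PontryaginDual X) {m : ℕ} (hχ : χ ^ m = 1) (x : X) :
    χ.toRootsOfUnity hχ x = 1 ↔ χ x = 1 := by
  simp [toRootsOfUnity, Subtype.ext_iff, Units.ext_iff, Circle.coe_eq_one]

end Monoid

section Group

variable {X : Type*} [Group X] [TopologicalSpace X] {ι : Type*}
  {r : ι → ℕ} {g : ι → PontryaginDual X} (hg : ∀ k, g k ^ r k = 1)

noncomputable def piToRootsOfUnity : X →* ∀ k, rootsOfUnity (r k) ℂ :=
  MonoidHom.pi fun k => (g k).toRootsOfUnity (hg k)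

theorem piToRootsOfUnity_apply (x : X) (k : ι) :
    piToRootsOfUnity hg x k = (g k).toRootsOfUnity (hg k) x :=
  rfl

theorem coe_ker_piToRootsOfUnity : ((piToRootsOfUnity hg).ker : Set X) = ⋂ k, g k ⁻¹' {1} := by
  ext x
  simp [funext_iff, piToRootsOfUnity_apply, toRootsOfUnity_eq_one_iff]

theorem card_range_piToRootsOfUnity_le [Fintype ι] [∀ k, NeZero (r k)] :
    Nat.card (piToRootsOfUnity hg).range ≤ ∏ k, r k :=
  calc Nat.card (piToRootsOfUnity hg).range ≤ Nat.card (∀ k, rootsOfUnity (r k) ℂ) :=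
        Subgroup.card_le_card_group _
    _ = ∏ k, Nat.card (rootsOfUnity (r k) ℂ) := Nat.card_pi
    _ ≤ ∏ k, r k := Finset.prod_le_prod' fun k _ => card_rootsOfUnity ℂ (r k)

theorem dvd_card_range_piToRootsOfUnity {k : ι} (hprime : (r k).Prime) (hne : g k ≠ 1) :
    r k ∣ Nat.card (piToRootsOfUnity hg).range := by
  have := Fact.mk hprime
  obtain ⟨x, hx⟩ : ∃ x, g k x ≠ 1 := by
    by_contra! h
    exact hne (ext h)
  have hxk : orderOf (piToRootsOfUnity hg x k) = r k :=
    orderOf_eq_prime (Subtype.ext (by rw [Subgroup.coe_pow]; exact (piToRootsOfUnity hg x k).2))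
      (by rwa [ne_eq, piToRootsOfUnity_apply, toRootsOfUnity_eq_one_iff])
  calc r k = orderOf (piToRootsOfUnity hg x k) := hxk.symm
    _ ∣ orderOf (piToRootsOfUnity hg x) :=
      orderOf_map_dvd (Pi.evalMonoidHom (fun k => rootsOfUnity (r k) ℂ) k) _
    _ ∣ Nat.card (piToRootsOfUnity hg).range := MonoidHom.orderOf_dvd_natCard_range _ x

theorem card_range_piToRootsOfUnity [Fintype ι] (hprime : ∀ k, (r k).Prime)
    (hinj : Function.Injective r) (hne : ∀ k, g k ≠ 1) :
    Nat.card (piToRootsOfUnity hg).range = ∏ k, r k :=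
  have (k : ι) : NeZero (r k) := ⟨(hprime k).ne_zero⟩
  (card_range_piToRootsOfUnity_le hg).antisymm <| Nat.le_of_dvd Nat.card_pos <|
    Nat.prod_dvd_of_injective_of_prime hprime hinj fun k =>
      dvd_card_range_piToRootsOfUnity hg (hprime k) (hne k)

end Group

end PontryaginDual

theorem haar_measure_inter_kernels_of_distinct_prime_order_characters_general
    {X : Type*} [CommGroup X] [TopologicalSpace X] [IsTopologicalGroup X]
    [MeasurableSpace X] [BorelSpace X]
    (μ : Measure X) [μ.IsHaarMeasure] [IsProbabilityMeasure μ]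
    (n : ℕ) (r : Fin n → ℕ) (hprime : ∀ k, (r k).Prime)
    (hdist : Function.Injective r)
    (g : Fin n → PontryaginDual X) (hord : ∀ k, orderOf (g k) = r k) :
    μ (⋂ k, ⇑(g k) ⁻¹' {1}) = (∏ k, (r k : ENNReal))⁻¹ := by
  have hg : ∀ k, g k ^ r k = 1 := fun k => hord k ▸ pow_orderOf_eq_one (g k)
  have hne : ∀ k, g k ≠ 1 := fun k h => (hprime k).ne_one (by rw [← hord k, h, orderOf_one])
  have (k : Fin n) : NeZero (r k) := ⟨(hprime k).ne_zero⟩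
  have hker := PontryaginDual.coe_ker_piToRootsOfUnity hg
  have hmeas : MeasurableSet ((PontryaginDual.piToRootsOfUnity hg).ker : Set X) := by
    rw [hker]
    exact .iInter fun k => (isClosed_singleton.preimage (g k).continuous).measurableSet
  rw [← hker, Subgroup.measure_eq_inv_index _ hmeas, Subgroup.index_ker,
    PontryaginDual.card_range_piToRootsOfUnity hg hprime hdist hne, Nat.cast_prod]

/-- On a compact abelian group with Haar probability measure, if `g 1, …, g n` are
continuous characters with pairwise distinct prime orders `r 1, …, r n`, then the
events `{g k = 1}` are mutually independent:
`ℙ(⋂ₖ gₖ⁻¹{1}) = (r 1 ⋯ r n)⁻¹`. -/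
theorem haar_measure_inter_kernels_of_distinct_prime_order_characters
    {X : Type*} [CommGroup X] [TopologicalSpace X] [IsTopologicalGroup X] [CompactSpace X]
    [MeasurableSpace X] [BorelSpace X]
    (μ : Measure X) [μ.IsHaarMeasure] [IsProbabilityMeasure μ]
    (n : ℕ) (r : Fin n → ℕ) (hprime : ∀ k, (r k).Prime)
    (hdist : Function.Injective r)
    (g : Fin n → PontryaginDual X) (hord : ∀ k, orderOf (g k) = r k) :
    μ (⋂ k, ⇑(g k) ⁻¹' {1}) = (∏ k, (r k : ENNReal))⁻¹ :=
  haar_measure_inter_kernels_of_distinct_prime_order_characters_general μ n r hprime hdist g hord
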